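/- arXiv:math/0211019 — 2 statements merged into one kernel-verified Lean document; each statement's English description precedes it below -/
import Mathlib

section
/- Let g ≥ 1. For any primitive element a of L = ℤ^{2g}, there exists an element φ of the subgroup of Sp(2g, ℤ) generated by the square transvections T_{x_1}^2, T_{y_1}^2, …, T_{x_g}^2, T_{y_g}^2 such that, writing φ(a) = Σ_{i=1}^g (m_i x_i + n_i y_i), every block (m_i, n_i) has one of the forms (0,0), (p,0), (0,p), or (p,p) for some integer p; that is, for each i, m_i = 0 or n_i = 0 or m_i = n_i. -/
namespace Paper

/-- `L g = ℤ^{2g}`, with basis indexed by `Fin g × Bool`: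
`(i, false)` corresponds to `x_i` and `(i, true)` to `y_i`. -/
abbrev L (g : ℕ) := (Fin g × Bool) → ℤ

/-- The standard symplectic form on `ℤ^{2g}`. -/
def omg {g : ℕ} (a b : L g) : ℤ :=
  ∑ i : Fin g, (a (i, false) * b (i, true) - a (i, true) * b (i, false))

lemma omg_add_right {g : ℕ} (a v w : L g) : omg a (v + w) = omg a v + omg a w := by
  simp only [omg, Pi.add_apply]
  rw [← Finset.sum_add_distrib]
  exact Finset.sum_congr rfl fun i _ => by ring

lemma omg_sub_right {g : ℕ} (a v w : L g) : omg a (v - w) = omg a v - omg a w := by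
  simp only [omg, Pi.sub_apply]
  rw [← Finset.sum_sub_distrib]
  exact Finset.sum_congr rfl fun i _ => by ring

lemma omg_smul_right {g : ℕ} (a : L g) (c : ℤ) (v : L g) : omg a (c • v) = c * omg a v := by
  simp only [omg, Pi.smul_apply, smul_eq_mul]
  rw [Finset.mul_sum]
  exact Finset.sum_congr rfl fun i _ => by ring

lemma omg_self {g : ℕ} (a : L g) : omg a a = 0 :=
  Finset.sum_eq_zero fun i _ => by ring

/-- A vector of `ℤ^{2g}` is primitive if it is not a nontrivial integer multiple. -/
def Primitive {g : ℕ} (a : L g) : Prop :=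
  ¬ ∃ (n : ℤ) (b : L g), n ≠ 0 ∧ n ≠ 1 ∧ n ≠ -1 ∧ a = n • b

/-- The transvection `T_a : v ↦ v + (a,v)·a`, as a linear automorphism of `ℤ^{2g}`. -/
def T {g : ℕ} (a : L g) : L g ≃ₗ[ℤ] L g where
  toFun v := v + omg a v • a
  invFun v := v - omg a v • a
  map_add' v w := by
    show (v + w) + omg a (v + w) • a = (v + omg a v • a) + (w + omg a w • a)
    rw [omg_add_right, add_smul]; abel
  map_smul' c v := by
    show (c • v) + omg a (c • v) • a = c • (v + omg a v • a)
    rw [omg_smul_right, mul_smul, smul_add]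
  left_inv v := by
    show v + omg a v • a - omg a (v + omg a v • a) • a = v
    rw [omg_add_right, omg_smul_right, omg_self, mul_zero, add_zero]
    abel
  right_inv v := by
    show v - omg a v • a + omg a (v - omg a v • a) • a = v
    rw [omg_sub_right, omg_smul_right, omg_self, mul_zero, sub_zero]
    abel

/-- `Sp(2g, ℤ)`: the group of linear automorphisms of `ℤ^{2g}` preserving
the symplectic form. -/
def Sp (g : ℕ) : Subgroup (L g ≃ₗ[ℤ] L g) where
  carrier := {φ | ∀ v w : L g, omg (φ v) (φ w) = omg v w}
  one_mem' := fun v w => rfl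
  mul_mem' := by
    intro φ ψ hφ hψ v w
    exact (hφ (ψ v) (ψ w)).trans (hψ v w)
  inv_mem' := by
    intro φ hφ v w
    have h := hφ (φ⁻¹ v) (φ⁻¹ w)
    have h1 : φ (φ⁻¹ v) = v := φ.apply_symm_apply v
    have h2 : φ (φ⁻¹ w) = w := φ.apply_symm_apply w
    rw [h1, h2] at h
    exact h.symm

/-- Reduction modulo 2, as a monoid homomorphism from the linear automorphism
group of `ℤ^{2g}` to matrices over `ℤ/2`. -/
def redHom (g : ℕ) :
    (L g ≃ₗ[ℤ] L g) →* Matrix (Fin g × Bool) (Fin g × Bool) (ZMod 2) where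
  toFun φ := (LinearMap.toMatrix' (φ : L g →ₗ[ℤ] L g)).map (Int.castRingHom (ZMod 2))
  map_one' := by
    show (LinearMap.toMatrix' ((1 : L g ≃ₗ[ℤ] L g) : L g →ₗ[ℤ] L g)).map
      (Int.castRingHom (ZMod 2)) = 1
    rw [LinearEquiv.coe_toLinearMap_one, LinearMap.toMatrix'_id,
      Matrix.map_one _ (map_zero _) (map_one _)]
  map_mul' φ ψ := by
    show (LinearMap.toMatrix' ((φ * ψ : L g ≃ₗ[ℤ] L g) : L g →ₗ[ℤ] L g)).map
        (Int.castRingHom (ZMod 2)) =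
      (LinearMap.toMatrix' (φ : L g →ₗ[ℤ] L g)).map (Int.castRingHom (ZMod 2)) *
      (LinearMap.toMatrix' (ψ : L g →ₗ[ℤ] L g)).map (Int.castRingHom (ZMod 2))
    rw [LinearEquiv.coe_toLinearMap_mul, LinearMap.toMatrix'_mul, Matrix.map_mul]

/-- `Sp^{(2)}(2g)`: the kernel of the reduction homomorphism
`Sp(2g, ℤ) → Sp(2g, ℤ/2)`, i.e. the symplectic automorphisms reducing to
the identity modulo 2. -/
def SpTwo (g : ℕ) : Subgroup (L g ≃ₗ[ℤ] L g) := Sp g ⊓ (redHom g).ker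

-- NEW AUX
abbrev Cl (g : ℕ) : Subgroup (L g ≃ₗ[ℤ] L g) :=
  Subgroup.closure {ψ : L g ≃ₗ[ℤ] L g | ∃ p : Fin g × Bool, ψ = (T (Pi.single p 1)) ^ 2}

lemma omg_single_false {g} (i : Fin g) (v : L g) :
    omg (Pi.single (i,false) 1) v = v (i,true) := by
  rw [omg, Finset.sum_eq_single i]
  · simp [Pi.single_apply]
  · intro j _ hj; simp [Pi.single_apply, Prod.ext_iff, hj]
  · simp

lemma omg_single_true {g} (i : Fin g) (v : L g) :
    omg (Pi.single (i,true) 1) v = - v (i,false) := by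
  rw [omg, Finset.sum_eq_single i]
  · simp [Pi.single_apply]
  · intro j _ hj; simp [Pi.single_apply, Prod.ext_iff, hj]
  · simp

lemma T_apply {g} (e v : L g) : T e v = v + omg e v • e := rfl

lemma Tsq_apply {g} (e v : L g) : ((T e) ^ 2) v = v + (2 * omg e v) • e := by
  have h : ((T e) ^ 2) v = T e (T e v) := by rw [sq]; rfl
  rw [h, T_apply, T_apply, omg_add_right, omg_smul_right, omg_self, mul_zero, add_zero,
    two_mul, add_smul]
  abel

lemma Tsq_inv_apply {g} (e v : L g) : ((T e) ^ 2)⁻¹ v = v - (2 * omg e v) • e := by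
  have h : ((T e) ^ 2) (v - (2 * omg e v) • e) = v := by
    rw [Tsq_apply, omg_sub_right, omg_smul_right, omg_self, mul_zero, sub_zero]
    abel
  conv_lhs => rw [← h]
  exact ((T e) ^ 2).symm_apply_apply _

lemma stepA {g} (i : Fin g) (c : ℤ) (hc : c = 1 ∨ c = -1) :
    ∃ ψ ∈ Cl g, ∀ v : L g,
      (∀ q : Fin g × Bool, q ≠ (i, false) → ψ v q = v q) ∧
      ψ v (i, false) = v (i, false) + 2 * c * v (i, true) := by
  rcases hc with rfl | rfl
  · refine ⟨(T (Pi.single (i,false) 1)) ^ 2, Subgroup.subset_closure ⟨_, rfl⟩, fun v => ⟨?_, ?_⟩⟩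
    · intro q hq
      rw [Tsq_apply]
      simp [Pi.single_apply, hq]
    · rw [Tsq_apply, omg_single_false]
      simp [Pi.single_apply]
  · refine ⟨((T (Pi.single (i,false) 1)) ^ 2)⁻¹,
      Subgroup.inv_mem _ (Subgroup.subset_closure ⟨_, rfl⟩), fun v => ⟨?_, ?_⟩⟩
    · intro q hq
      rw [Tsq_inv_apply]
      simp [Pi.single_apply, hq]
    · rw [Tsq_inv_apply, omg_single_false]
      simp [Pi.single_apply]
      ring

lemma stepB {g} (i : Fin g) (c : ℤ) (hc : c = 1 ∨ c = -1) :
    ∃ ψ ∈ Cl g, ∀ v : L g,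
      (∀ q : Fin g × Bool, q ≠ (i, true) → ψ v q = v q) ∧
      ψ v (i, true) = v (i, true) + 2 * c * v (i, false) := by
  rcases hc with rfl | rfl
  · refine ⟨((T (Pi.single (i,true) 1)) ^ 2)⁻¹,
      Subgroup.inv_mem _ (Subgroup.subset_closure ⟨_, rfl⟩), fun v => ⟨?_, ?_⟩⟩
    · intro q hq
      rw [Tsq_inv_apply]
      simp [Pi.single_apply, hq]
    · rw [Tsq_inv_apply, omg_single_true]
      simp [Pi.single_apply]
  · refine ⟨(T (Pi.single (i,true) 1)) ^ 2, Subgroup.subset_closure ⟨_, rfl⟩, fun v => ⟨?_, ?_⟩⟩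
    · intro q hq
      rw [Tsq_apply]
      simp [Pi.single_apply, hq]
    · rw [Tsq_apply, omg_single_true]
      simp [Pi.single_apply]

lemma block {g : ℕ} : ∀ N : ℕ, ∀ v : L g, ∀ i : Fin g,
    (v (i,false)).natAbs + (v (i,true)).natAbs ≤ N →
    ∃ φ ∈ Cl g, (∀ q : Fin g × Bool, q.1 ≠ i → φ v q = v q) ∧
      (φ v (i,false) = 0 ∨ φ v (i,true) = 0 ∨ φ v (i,false) = φ v (i,true)) := by
  intro N
  induction N with
  | zero =>
    intro v i h
    refine ⟨1, one_mem _, fun q _ => rfl, ?_⟩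
    left
    show v (i, false) = 0
    omega
  | succ N ih =>
    intro v i h
    by_cases hgood : v (i,false) = 0 ∨ v (i,true) = 0 ∨ v (i,false) = v (i,true)
    · exact ⟨1, one_mem _, fun q _ => rfl, hgood⟩
    push_neg at hgood
    obtain ⟨hm, hn, hmn⟩ := hgood
    rcases lt_trichotomy (v (i,true)).natAbs (v (i,false)).natAbs with hlt | heq | hgt
    · -- reduce the m coordinate
      have hex : ∃ c : ℤ, (c = 1 ∨ c = -1) ∧
          (v (i,false) + 2*c*(v (i,true))).natAbs < (v (i,false)).natAbs := by
        have halt : (v (i,false) + 2*(v (i,true))).natAbs < (v (i,false)).natAbs ∨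
            (v (i,false) - 2*(v (i,true))).natAbs < (v (i,false)).natAbs := by omega
        rcases halt with h1 | h1
        · refine ⟨1, Or.inl rfl, ?_⟩
          have he : v (i,false) + 2*(1:ℤ)*(v (i,true)) = v (i,false) + 2*(v (i,true)) := by ring
          rw [he]; exact h1
        · refine ⟨-1, Or.inr rfl, ?_⟩
          have he : v (i,false) + 2*(-1:ℤ)*(v (i,true)) = v (i,false) - 2*(v (i,true)) := by ring
          rw [he]; exact h1
      obtain ⟨c, hc1, hred⟩ := hex
      obtain ⟨ψ, hψmem, hψ⟩ := stepA i c hc1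
      obtain ⟨hψout, hψin⟩ := hψ v
      have hwt : ψ v (i,true) = v (i,true) := hψout _ (by simp)
      have hsum : (ψ v (i,false)).natAbs + (ψ v (i,true)).natAbs ≤ N := by
        rw [hψin, hwt]; omega
      obtain ⟨φ, hφmem, hφout, hφgood⟩ := ih (ψ v) i hsum
      refine ⟨φ * ψ, mul_mem hφmem hψmem, ?_, ?_⟩
      · intro q hq
        have h1 : (φ * ψ) v q = φ (ψ v) q := rfl
        rw [h1, hφout q hq, hψout q (by rintro rfl; exact hq rfl)]
      · exact hφgood
    · -- |m| = |n| and m ≠ n, so m = -n; one step gives (n, n)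
      obtain ⟨ψ, hψmem, hψ⟩ := stepA i 1 (Or.inl rfl)
      obtain ⟨hψout, hψin⟩ := hψ v
      have hwt : ψ v (i,true) = v (i,true) := hψout _ (by simp)
      refine ⟨ψ, hψmem, fun q hq => hψout q (by rintro rfl; exact hq rfl), ?_⟩
      right; right
      rw [hψin, hwt]
      omega
    · -- reduce the n coordinate
      have hex : ∃ c : ℤ, (c = 1 ∨ c = -1) ∧
          (v (i,true) + 2*c*(v (i,false))).natAbs < (v (i,true)).natAbs := by
        have halt : (v (i,true) + 2*(v (i,false))).natAbs < (v (i,true)).natAbs ∨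
            (v (i,true) - 2*(v (i,false))).natAbs < (v (i,true)).natAbs := by omega
        rcases halt with h1 | h1
        · refine ⟨1, Or.inl rfl, ?_⟩
          have he : v (i,true) + 2*(1:ℤ)*(v (i,false)) = v (i,true) + 2*(v (i,false)) := by ring
          rw [he]; exact h1
        · refine ⟨-1, Or.inr rfl, ?_⟩
          have he : v (i,true) + 2*(-1:ℤ)*(v (i,false)) = v (i,true) - 2*(v (i,false)) := by ring
          rw [he]; exact h1
      obtain ⟨c, hc1, hred⟩ := hex
      obtain ⟨ψ, hψmem, hψ⟩ := stepB i c hc1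
      obtain ⟨hψout, hψin⟩ := hψ v
      have hwf : ψ v (i,false) = v (i,false) := hψout _ (by simp)
      have hsum : (ψ v (i,false)).natAbs + (ψ v (i,true)).natAbs ≤ N := by
        rw [hψin, hwf]; omega
      obtain ⟨φ, hφmem, hφout, hφgood⟩ := ih (ψ v) i hsum
      refine ⟨φ * ψ, mul_mem hφmem hψmem, ?_, ?_⟩
      · intro q hq
        have h1 : (φ * ψ) v q = φ (ψ v) q := rfl
        rw [h1, hφout q hq, hψout q (by rintro rfl; exact hq rfl)]
      · exact hφgood

lemma combine {g : ℕ} (v : L g) (s : Finset (Fin g)) :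
    ∃ φ ∈ Cl g, ∀ i ∈ s,
      (φ v (i,false) = 0 ∨ φ v (i,true) = 0 ∨ φ v (i,false) = φ v (i,true)) := by
  classical
  induction s using Finset.induction_on with
  | empty => exact ⟨1, one_mem _, by simp⟩
  | @insert i s hi ih =>
    obtain ⟨φ, hφmem, hφ⟩ := ih
    obtain ⟨ψ, hψmem, hψout, hψgood⟩ := block _ (φ v) i le_rfl
    refine ⟨ψ * φ, mul_mem hψmem hφmem, ?_⟩
    intro j hj
    rcases Finset.mem_insert.mp hj with rfl | hj
    · exact hψgood
    · have hji : j ≠ i := fun h => hi (h ▸ hj)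
      have h1 : (ψ * φ) v (j, false) = φ v (j, false) := hψout (j, false) hji
      have h2 : (ψ * φ) v (j, true) = φ v (j, true) := hψout (j, true) hji
      rw [h1, h2]
      exact hφ j hj

/-- For any primitive `a ∈ ℤ^{2g}` there is a `φ` in the subgroup generated by
the square transvections about the basis vectors `x_1, y_1, …, x_g, y_g`
such that every block `(m_i, n_i)` of `φ(a)` has the form
`(0,0)`, `(p,0)`, `(0,p)` or `(p,p)`. -/
theorem statement5 (g : ℕ) (hg : 1 ≤ g) (a : L g) (ha : Primitive a) :
    ∃ φ ∈ Subgroup.closure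
        {ψ : L g ≃ₗ[ℤ] L g | ∃ p : Fin g × Bool, ψ = (T (Pi.single p 1)) ^ 2},
      ∀ i : Fin g,
        φ a (i, false) = 0 ∨ φ a (i, true) = 0 ∨ φ a (i, false) = φ a (i, true) := by
  obtain ⟨φ, hmem, h⟩ := combine a Finset.univ
  exact ⟨φ, hmem, fun i => h i (Finset.mem_univ i)⟩

end Paper
end

section
/- Let g ≥ 1. For any primitive element a of L = ℤ^{2g}, there exists an element φ of the subgroup of Sp(2g, ℤ) generated by the square transvections T_c^2, where c ranges over the nonzero vectors Σ_{i=1}^g (ε_i x_i + δ_i y_i) with all ε_i, δ_i ∈ {0, 1}, such that φ(a) is either itself a nonzero vector Σ_{i=1}^g (ε_i x_i + δ_i y_i) with all ε_i, δ_i ∈ {0, 1}, or φ(a) = −x_i for some i with 1 ≤ i ≤ g. -/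
namespace Paper

/-! A square transvection acts by `v ↦ v + 2k (c, v) c`. With `c = x_i` or `y_i` one adds an
even multiple of one coordinate of the `i`-th handle to the other. With `c = e_p + e_q'`, where
`q` lies in another handle and `q'` is its partner, followed by the transvection along `e_p`,
one adds an even multiple of `a_q` to `a_p`, disturbing only `a_q'`, which is then reduced
modulo `2 a_q` as well. So a largest entry `|a_p| = m ≥ 2` can be pushed below `m` whenever
some entry lies strictly between `0` and `m`, and primitivity forbids all nonzero entries to have
absolute value `m`. Once all entries lie in `{-1, 0, 1}`, each `-1` is turned into `1`, using
`c = x_i + y_i` when its partner is `0`. Each move decreases `∑ 3 ^ |a_p|` plus the number of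
negative entries. -/

lemma exists_natAbs_add_two_mul_le (x : ℤ) {s : ℤ} (hs : s ≠ 0) :
    ∃ k : ℤ, (x + 2 * k * s).natAbs ≤ s.natAbs := by
  have hm : 0 < 2 * s.natAbs := by omega
  refine ⟨-x.bdiv (2 * s.natAbs) * s.sign, ?_⟩
  have h : x + 2 * (-x.bdiv (2 * s.natAbs) * s.sign) * s = x.bmod (2 * s.natAbs) := by
    rw [Int.bmod_eq_self_sub_mul_bdiv, Nat.cast_mul, ← Int.sign_mul_self]
    ring
  have := Int.le_bmod (x := x) hm
  have := Int.bmod_lt (x := x) hm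
  omega

variable {g : ℕ}

lemma omg_add_left (a b v : L g) : omg (a + b) v = omg a v + omg b v := by
  simp only [omg, Pi.add_apply, ← Finset.sum_add_distrib]
  exact Finset.sum_congr rfl fun i _ => by ring

def omgSign (b : Bool) : ℤ := if b then -1 else 1

lemma omgSign_mul_self (b : Bool) : omgSign b * omgSign b = 1 := by
  cases b <;> rfl

lemma omgSign_not (b : Bool) : omgSign (!b) = -omgSign b := by
  cases b <;> rfl

lemma omg_single (p : Fin g × Bool) (v : L g) :
    omg (Pi.single p 1) v = omgSign p.2 * v (p.1, !p.2) := by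
  obtain ⟨i, b⟩ := p
  rw [omg, Finset.sum_eq_single i (fun j _ hj => by simp [hj]) (by simp)]
  cases b <;> simp [omgSign]

lemma T_inv_apply (c v : L g) : (T c)⁻¹ v = v - omg c v • c := rfl

lemma T_zpow_apply (c : L g) (k : ℤ) (v : L g) : (T c ^ k) v = v + (k * omg c v) • c := by
  have omg_smul_self (t : ℤ) (w : L g) : omg c (w + t • c) = omg c w := by
    rw [omg_add_right, omg_smul_right, omg_self, mul_zero, add_zero]
  induction k using Int.induction_on generalizing v with
  | zero => simp
  | succ n ih =>
    rw [zpow_add_one, LinearEquiv.mul_apply, ih, show T c v = v + omg c v • c from rfl,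
      omg_smul_self]
    module
  | pred n ih =>
    rw [zpow_sub_one, LinearEquiv.mul_apply, ih, T_inv_apply, sub_eq_add_neg, ← neg_smul,
      omg_smul_self]
    module

lemma Primitive.not_forall_dvd {a : L g} (ha : Primitive a) {m : ℕ} (hm : 2 ≤ m) :
    ¬ ∀ p, (m : ℤ) ∣ a p := fun h =>
  ha ⟨m, fun p => a p / m, by omega, by omega, by omega,
    funext fun p => (Int.mul_ediv_cancel' (h p)).symm⟩

lemma Primitive.ne_zero {a : L g} (ha : Primitive a) : a ≠ 0 := by
  rintro rfl
  exact ha.not_forall_dvd le_rfl fun _ => dvd_zero 2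

lemma Primitive.map {a : L g} (ha : Primitive a) (φ : L g ≃ₗ[ℤ] L g) : Primitive (φ a) := by
  rintro ⟨n, b, hn0, hn1, hn2, hab⟩
  exact ha ⟨n, φ.symm b, hn0, hn1, hn2, by rw [← map_smul, ← hab, φ.symm_apply_apply]⟩

def IsZeroOne (c : L g) : Prop := ∀ p, c p = 0 ∨ c p = 1

lemma isZeroOne_single (p : Fin g × Bool) : IsZeroOne (Pi.single p (1 : ℤ)) := by
  intro q
  by_cases h : q = p <;> simp [h]

lemma isZeroOne_single_add_single {p q : Fin g × Bool} (hpq : p ≠ q) :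
    IsZeroOne (Pi.single p (1 : ℤ) + Pi.single q 1) := by
  intro r
  by_cases hp : r = p <;> by_cases hq : r = q <;> simp_all

lemma single_add_single_ne_zero (p q : Fin g × Bool) :
    (Pi.single p 1 + Pi.single q 1 : L g) ≠ 0 := by
  intro h
  have := congrFun h p
  by_cases hq : p = q <;> simp [hq] at this

def sqTransvectionGroup (g : ℕ) : Subgroup (L g ≃ₗ[ℤ] L g) :=
  Subgroup.closure
    {ψ : L g ≃ₗ[ℤ] L g |
      ∃ c : L g, IsZeroOne c ∧ c ≠ 0 ∧ ψ = (T c) ^ 2}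

def Reachable (a b : L g) : Prop := ∃ φ ∈ sqTransvectionGroup g, φ a = b

namespace Reachable

lemma refl (a : L g) : Reachable a a := ⟨1, one_mem _, rfl⟩

lemma trans {a b c : L g} (hab : Reachable a b) (hbc : Reachable b c) : Reachable a c := by
  obtain ⟨φ, hφ, rfl⟩ := hab
  obtain ⟨ψ, hψ, rfl⟩ := hbc
  exact ⟨ψ * φ, mul_mem hψ hφ, rfl⟩

lemma add_transvection {c : L g} (hc : IsZeroOne c) (hc0 : c ≠ 0) (k : ℤ) (a : L g) :
    Reachable a (a + (2 * k * omg c a) • c) := by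
  refine ⟨(T c ^ 2) ^ k, zpow_mem (Subgroup.subset_closure ?_) k, ?_⟩
  · exact ⟨c, hc, hc0, rfl⟩
  · rw [← zpow_natCast, ← zpow_mul, T_zpow_apply, Nat.cast_ofNat]

lemma add_single (a : L g) (p : Fin g × Bool) (k : ℤ) :
    Reachable a (a + (2 * k * a (p.1, !p.2)) • Pi.single p 1) := by
  have h := add_transvection (isZeroOne_single p) (Pi.single_ne_zero_iff.mpr one_ne_zero)
    (k * omgSign p.2) a
  rw [omg_single] at h
  convert h using 3
  linear_combination (-2 * k * a (p.1, !p.2)) * omgSign_mul_self p.2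

lemma exists_add_cross {p q : Fin g × Bool} (hpq : p.1 ≠ q.1) (a : L g) (k : ℤ) :
    ∃ t : ℤ, Reachable a (a + (2 * k * a q) • Pi.single p 1 + t • Pi.single (q.1, !q.2) 1) := by
  have hpq' : p ≠ (q.1, !q.2) := fun h => hpq (by rw [h])
  set sp := omgSign p.2
  set sq := omgSign (!q.2)
  have h1 := add_transvection (isZeroOne_single_add_single hpq')
    (single_add_single_ne_zero _ _) (k * sq) a
  rw [omg_add_left, omg_single, omg_single, Bool.not_not] at h1
  set a1 := a + (2 * (k * sq) * (sp * a (p.1, !p.2) + sq * a q)) •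
    (Pi.single p 1 + Pi.single (q.1, !q.2) 1)
  have h2 := add_single a1 p (-(k * sq * sp))
  have ha1 : a1 (p.1, !p.2) = a (p.1, !p.2) := by
    simp [a1, Prod.ext_iff, hpq]
  refine ⟨2 * (k * sq) * (sp * a (p.1, !p.2) + sq * a q), h1.trans ?_⟩
  convert h2 using 1
  rw [ha1, show 2 * k * a q = 2 * k * (sq * sq) * a q by rw [omgSign_mul_self, mul_one]]
  module

lemma add_two_single_of_eq_neg_one (a : L g) {p : Fin g × Bool} (hp : a p = -1)
    (hp' : (a (p.1, !p.2)).natAbs ≤ 1) : Reachable a (a + (2 : ℤ) • Pi.single p 1) := by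
  by_cases h0 : a (p.1, !p.2) = 0
  · -- `(a p, a p') = (-1, 0) ↦ (-1, -2) ↦ (1, 0)`, the second step along `e p + e p'`
    have h1 := add_single a (p.1, !p.2) 1
    simp only [Bool.not_not, hp] at h1
    set a1 := a + (2 * 1 * -1 : ℤ) • Pi.single (p.1, !p.2) 1
    have hp1 : p ≠ (p.1, !p.2) := by simp [Prod.ext_iff]
    have h2 := add_transvection (isZeroOne_single_add_single hp1)
      (single_add_single_ne_zero _ _) (-omgSign p.2) a1
    rw [omg_add_left, omg_single, omg_single, Bool.not_not, omgSign_not] at h2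
    have ha1 : a1 p = -1 ∧ a1 (p.1, !p.2) = -2 := by
      simp [a1, hp, h0, Prod.ext_iff]
    rw [ha1.1, ha1.2] at h2
    convert h1.trans h2 using 1
    rw [show 2 * -omgSign p.2 * (omgSign p.2 * -2 + -omgSign p.2 * -1) = 2 by
      linear_combination 2 * omgSign_mul_self p.2]
    module
  · have hsq : a (p.1, !p.2) * a (p.1, !p.2) = 1 := by
      rcases (by omega : a (p.1, !p.2) = 1 ∨ a (p.1, !p.2) = -1) with h | h <;> rw [h] <;> rfl
    convert add_single a p (a (p.1, !p.2)) using 3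
    rw [mul_assoc, hsq, mul_one]

end Reachable

lemma Primitive.of_reachable {a b : L g} (ha : Primitive a) (hab : Reachable a b) :
    Primitive b := by
  obtain ⟨φ, -, rfl⟩ := hab
  exact ha.map φ

lemma exists_reachable_reduce (a : L g) {p q : Fin g × Bool} (hpq : p ≠ q) (hq : a q ≠ 0) :
    ∃ b r, Reachable a b ∧ r ≠ p ∧ (b p).natAbs ≤ (a q).natAbs ∧
      (b r).natAbs ≤ (a q).natAbs ∧ ∀ s, s ≠ p → s ≠ r → b s = a s := by
  obtain ⟨k, hk⟩ := exists_natAbs_add_two_mul_le (a p) hq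
  by_cases hpq1 : p.1 = q.1
  · obtain rfl : (p.1, !p.2) = q :=
      Prod.ext hpq1 (Bool.eq_not_of_ne fun h => hpq (Prod.ext hpq1 h.symm)).symm
    refine ⟨_, _, Reachable.add_single a p k, hpq.symm, ?_, ?_, fun s hs _ => ?_⟩
    · simpa using hk
    · simp [Prod.ext_iff]
    · simp [hs]
  · obtain ⟨t, ht⟩ := Reachable.exists_add_cross hpq1 a k
    set a1 := a + (2 * k * a q) • Pi.single p 1 + t • Pi.single (q.1, !q.2) 1
    have ha1q : a1 q = a q := by simp [a1, Prod.ext_iff, hpq.symm]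
    obtain ⟨k', hk'⟩ := exists_natAbs_add_two_mul_le (a1 (q.1, !q.2)) hq
    have h2 := Reachable.add_single a1 (q.1, !q.2) k'
    rw [Bool.not_not, ha1q] at h2
    refine ⟨_, (q.1, !q.2), ht.trans h2, fun h => hpq1 (by rw [← h]), ?_, ?_, fun s hs hs' => ?_⟩
    · simpa [a1, Prod.ext_iff, hpq1] using hk
    · simpa [a1, Prod.ext_iff, hpq1] using hk'
    · simp [a1, hs, hs']

/-- Base `3` makes lowering an entry of absolute value `m ≥ 2` below `m` outweigh moving one
other entry anywhere below `m`; the extra `1` on negative entries makes sign corrections descend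
too. -/
def weight (n : ℤ) : ℕ := 3 ^ n.natAbs + if n < 0 then 1 else 0

def measure (a : L g) : ℕ := ∑ p, weight (a p)

lemma measure_lt_of_eqOn_compl {a b : L g} (S : Finset (Fin g × Bool))
    (h : ∀ r ∉ S, b r = a r) (hlt : ∑ r ∈ S, weight (b r) < ∑ r ∈ S, weight (a r)) :
    measure b < measure a := by
  have hcompl : ∑ r ∈ Sᶜ, weight (b r) = ∑ r ∈ Sᶜ, weight (a r) :=
    Finset.sum_congr rfl fun r hr => by rw [h r (Finset.mem_compl.mp hr)]
  rw [measure, measure, ← Finset.sum_add_sum_compl S, ← Finset.sum_add_sum_compl S, hcompl]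
  exact Nat.add_lt_add_right hlt _

lemma weight_add_weight_lt {x y x' y' : ℤ} (hx : 2 ≤ x.natAbs) (hx' : x'.natAbs < x.natAbs)
    (hy' : y'.natAbs < x.natAbs) : weight x' + weight y' < weight x + weight y := by
  obtain ⟨m, hm⟩ : ∃ m, x.natAbs = m + 2 := ⟨x.natAbs - 2, by omega⟩
  have h3 : 3 ^ x.natAbs = 3 * 3 ^ (m + 1) := by rw [hm, pow_succ 3 (m + 1), mul_comm]
  have hx'3 : 3 ^ x'.natAbs ≤ 3 ^ (m + 1) := Nat.pow_le_pow_right (by norm_num) (by omega)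
  have hy'3 : 3 ^ y'.natAbs ≤ 3 ^ (m + 1) := Nat.pow_le_pow_right (by norm_num) (by omega)
  have : 3 ≤ 3 ^ (m + 1) := Nat.le_self_pow (by omega) 3
  have : 1 ≤ 3 ^ y.natAbs := Nat.one_le_pow _ _ (by norm_num)
  unfold weight
  split_ifs <;> omega

lemma exists_reachable_measure_lt_of_two_le {a : L g} (ha : Primitive a) {p₀ : Fin g × Bool}
    (hp₀ : 2 ≤ (a p₀).natAbs) : ∃ b, Reachable a b ∧ measure b < measure a := by
  obtain ⟨p, -, hp⟩ := Finset.exists_max_image Finset.univ (fun p => (a p).natAbs)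
    ⟨p₀, Finset.mem_univ _⟩
  have hmax : ∀ q, (a q).natAbs ≤ (a p).natAbs := fun q => hp q (Finset.mem_univ q)
  have hm : 2 ≤ (a p).natAbs := hp₀.trans (hmax p₀)
  by_cases hq : ∃ q, a q ≠ 0 ∧ (a q).natAbs < (a p).natAbs
  · obtain ⟨q, hq0, hqp⟩ := hq
    obtain ⟨b, r, hab, hrp, hbp, hbr, hb⟩ :=
      exists_reachable_reduce a (fun h => (h ▸ hqp).false) hq0
    refine ⟨b, hab, measure_lt_of_eqOn_compl {p, r} (fun s hs => ?_) ?_⟩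
    · simp only [Finset.mem_insert, Finset.mem_singleton, not_or] at hs
      exact hb s hs.1 hs.2
    · rw [Finset.sum_pair hrp.symm, Finset.sum_pair hrp.symm]
      exact weight_add_weight_lt hm (by omega) (by omega)
  · -- every entry is `0` or `±m`, so `m` divides `a`
    refine absurd (fun q => ?_) (ha.not_forall_dvd hm)
    simp only [not_exists, not_and, not_lt] at hq
    rcases eq_or_ne (a q) 0 with h | h
    · simp [h]
    · exact Int.natCast_dvd.mpr (le_antisymm (hmax q) (hq q h) ▸ dvd_rfl)

lemma measure_add_two_single_lt {a : L g} {p : Fin g × Bool} (hp : a p = -1) :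
    measure (a + (2 : ℤ) • Pi.single p 1) < measure a := by
  refine measure_lt_of_eqOn_compl {p} (fun r hr => ?_) ?_
  · simp [Finset.mem_singleton.not.mp hr]
  · simp [hp, weight]

lemma exists_reachable_isZeroOne {a : L g} (ha : Primitive a) :
    ∃ b, Reachable a b ∧ IsZeroOne b := by
  induction hn : measure a using Nat.strong_induction_on generalizing a with
  | _ n ih =>
  by_cases h01 : IsZeroOne a
  · exact ⟨a, Reachable.refl a, h01⟩
  obtain ⟨b, hab, hlt⟩ : ∃ b, Reachable a b ∧ measure b < measure a := by
    by_cases hbig : ∃ p, 2 ≤ (a p).natAbs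
    · obtain ⟨p, hp⟩ := hbig
      exact exists_reachable_measure_lt_of_two_le ha hp
    simp only [not_exists, not_le] at hbig
    obtain ⟨p, hp⟩ : ∃ p, a p = -1 := by
      simp only [IsZeroOne, not_forall, not_or] at h01
      obtain ⟨p, hp⟩ := h01
      exact ⟨p, by have := hbig p; omega⟩
    exact ⟨_, Reachable.add_two_single_of_eq_neg_one a hp (by have := hbig (p.1, !p.2); omega),
      measure_add_two_single_lt hp⟩
  obtain ⟨c, hbc, hc⟩ := ih _ (hn ▸ hlt) (ha.of_reachable hab) rfl
  exact ⟨c, hab.trans hbc, hc⟩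

theorem statement6_general (g : ℕ) (a : L g) (ha : Primitive a) :
    ∃ φ ∈ Subgroup.closure
        {ψ : L g ≃ₗ[ℤ] L g |
          ∃ c : L g, (∀ p, c p = 0 ∨ c p = 1) ∧ c ≠ 0 ∧ ψ = (T c) ^ 2},
      ((∀ p, φ a p = 0 ∨ φ a p = 1) ∧ φ a ≠ 0) ∨
        ∃ i : Fin g, φ a = -Pi.single (i, false) 1 := by
  obtain ⟨_, ⟨φ, hφ, rfl⟩, hb⟩ := exists_reachable_isZeroOne ha
  exact ⟨φ, hφ, Or.inl ⟨hb, (ha.map φ).ne_zero⟩⟩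

/-- For any primitive `a ∈ ℤ^{2g}` there is a `φ` in the subgroup generated by
the square transvections about the nonzero `0`-`1` vectors such that `φ(a)` is
either itself a nonzero `0`-`1` vector, or equals `-x_i` for some `i`. -/
theorem statement6 (g : ℕ) (hg : 1 ≤ g) (a : L g) (ha : Primitive a) :
    ∃ φ ∈ Subgroup.closure
        {ψ : L g ≃ₗ[ℤ] L g |
          ∃ c : L g, (∀ p, c p = 0 ∨ c p = 1) ∧ c ≠ 0 ∧ ψ = (T c) ^ 2},
      ((∀ p, φ a p = 0 ∨ φ a p = 1) ∧ φ a ≠ 0) ∨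
        ∃ i : Fin g, φ a = -Pi.single (i, false) 1 :=
  statement6_general g a ha

end Paper
end
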